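/- Let H, X1, X2, X3 be binary random variables with X1, X2, X3 conditionally independent given H. Let P be the 2×2×2 joint table of (X1,X2,X3), μ_{ij} = Cov(X_i,X_j), and μ_{123} = E[∏(X_i − EX_i)]. Then Det P = μ_{123}² + 4μ_{12}μ_{13}μ_{23} satisfies μ_{12}²μ_{13}² + μ_{12}²μ_{23}² + μ_{13}²μ_{23}² ≤ Det P and Det P ≤ min{μ_{12}², μ_{13}², μ_{23}²}. -/

import Mathlib

open Finset

/-- Joint distribution of the tripod (naive Bayes) model: `X₁,X₂,X₃` are binary and
conditionally independent given the binary hidden variable `H`. -/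
noncomputable def tripodJoint (π : Fin 2 → ℝ) (q : Fin 3 → Fin 2 → Fin 2 → ℝ) :
    (Fin 3 → Fin 2) → ℝ :=
  fun x => ∑ h : Fin 2, π h * ∏ i : Fin 3, q i (x i) h

noncomputable def EV3 (p : (Fin 3 → Fin 2) → ℝ) (i : Fin 3) : ℝ :=
  ∑ x : Fin 3 → Fin 2, p x * ((x i : ℕ) : ℝ)

/-- `Cov(X_i, X_j) = μ_{ij}`. -/
noncomputable def cov3 (p : (Fin 3 → Fin 2) → ℝ) (i j : Fin 3) : ℝ :=
  ∑ x : Fin 3 → Fin 2, p x * (((x i : ℕ) : ℝ) - EV3 p i) * (((x j : ℕ) : ℝ) - EV3 p j)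

/-- `μ_{123} = E[∏ (X_i − EX_i)]`. -/
noncomputable def thirdCentral3 (p : (Fin 3 → Fin 2) → ℝ) : ℝ :=
  ∑ x : Fin 3 → Fin 2, p x * ∏ i : Fin 3, (((x i : ℕ) : ℝ) - EV3 p i)

/-!
Conditional independence makes every centred moment of the tripod factor through the hidden
variable. With `t = P(H = 0)` and `δᵢ = P(Xᵢ = 1 | H = 0) - P(Xᵢ = 1 | H = 1)` one finds
`μᵢⱼ = t(1-t) δᵢ δⱼ` and `μ₁₂₃ = t(1-t)(1-2t) δ₁δ₂δ₃`, so `(1-2t)² + 4t(1-t) = 1` gives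
`Det P = (t(1-t) δ₁δ₂δ₃)²`. Both bounds then come from `|δᵢ| ≤ 1` and `t(1-t) ≤ 1/4`: dropping a
factor `δₖ²` gives the upper bound, and the left-hand sum equals
`Det P · (t(1-t))² (δ₁² + δ₂² + δ₃²) ≤ Det P · 3/16`.
-/

theorem Fintype.sum_mixture_mul_prod {ι α β R : Type*} [Fintype ι] [DecidableEq ι] [Fintype α]
    [Fintype β] [CommSemiring R] (π : β → R) (q : ι → α → β → R) (g : ι → α → R) :
    ∑ x : ι → α, (∑ h, π h * ∏ i, q i (x i) h) * ∏ i, g i (x i) =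
      ∑ h, π h * ∏ i, ∑ a, q i a h * g i a := by
  simp_rw [Fintype.prod_sum, mul_sum, sum_mul, prod_mul_distrib, mul_assoc]
  exact sum_comm

section Tripod

variable {π : Fin 2 → ℝ} {q : Fin 3 → Fin 2 → Fin 2 → ℝ}

theorem sum_tripodJoint_mul_prod_sub (hq1 : ∀ i h, q i 0 h + q i 1 h = 1)
    (S : Finset (Fin 3)) (c : Fin 3 → ℝ) :
    ∑ x, tripodJoint π q x * ∏ i ∈ S, (((x i : ℕ) : ℝ) - c i) =
      ∑ h, π h * ∏ i ∈ S, (q i 1 h - c i) := by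
  have hS (f : Fin 3 → ℝ) : ∏ i ∈ S, f i = ∏ i, if i ∈ S then f i else 1 := by
    rw [prod_ite_mem, univ_inter]
  simp_rw [hS, tripodJoint]
  refine (Fintype.sum_mixture_mul_prod π q
    fun i a => if i ∈ S then ((a : ℕ) : ℝ) - c i else 1).trans ?_
  refine sum_congr rfl fun h _ => congrArg _ (prod_congr rfl fun i _ => ?_)
  split_ifs
  · simp only [Fin.sum_univ_two, Fin.val_zero, Fin.val_one, Nat.cast_zero, Nat.cast_one]
    linear_combination (-c i) * hq1 i h
  · simpa only [Fin.sum_univ_two, mul_one] using hq1 i h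

theorem EV3_tripodJoint (hq1 : ∀ i h, q i 0 h + q i 1 h = 1) (i : Fin 3) :
    EV3 (tripodJoint π q) i = π 0 * q i 1 0 + π 1 * q i 1 1 := by
  rw [EV3]
  simpa [Fin.sum_univ_two] using sum_tripodJoint_mul_prod_sub (π := π) hq1 {i} 0

theorem cov3_tripodJoint (hπ1 : π 0 + π 1 = 1) (hq1 : ∀ i h, q i 0 h + q i 1 h = 1)
    {i j : Fin 3} (hij : i ≠ j) :
    cov3 (tripodJoint π q) i j = π 0 * π 1 * (q i 1 0 - q i 1 1) * (q j 1 0 - q j 1 1) := by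
  have h := sum_tripodJoint_mul_prod_sub (π := π) hq1 {i, j} (EV3 (tripodJoint π q))
  simp only [prod_pair hij, ← mul_assoc, Fin.sum_univ_two] at h
  rw [cov3, h, EV3_tripodJoint hq1, EV3_tripodJoint hq1, show π 1 = 1 - π 0 by linarith]
  ring

theorem thirdCentral3_tripodJoint (hπ1 : π 0 + π 1 = 1) (hq1 : ∀ i h, q i 0 h + q i 1 h = 1) :
    thirdCentral3 (tripodJoint π q) =
      π 0 * π 1 * (π 1 - π 0) * ∏ i, (q i 1 0 - q i 1 1) := by
  have h := sum_tripodJoint_mul_prod_sub (π := π) hq1 univ (EV3 (tripodJoint π q))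
  simp only [Fin.sum_univ_two] at h
  rw [thirdCentral3, h]
  simp only [Fin.prod_univ_three, EV3_tripodJoint hq1]
  rw [show π 1 = 1 - π 0 by linarith]
  ring

theorem hyperdet_tripodJoint (hπ1 : π 0 + π 1 = 1) (hq1 : ∀ i h, q i 0 h + q i 1 h = 1) :
    thirdCentral3 (tripodJoint π q) ^ 2 + 4 * cov3 (tripodJoint π q) 0 1 *
        cov3 (tripodJoint π q) 0 2 * cov3 (tripodJoint π q) 1 2 =
      (π 0 * π 1 * ∏ i, (q i 1 0 - q i 1 1)) ^ 2 := by
  have hmix : (π 1 - π 0) ^ 2 + 4 * (π 0 * π 1) = 1 := by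
    linear_combination (π 0 + π 1 + 1) * hπ1
  rw [thirdCentral3_tripodJoint hπ1 hq1, cov3_tripodJoint hπ1 hq1 (by decide),
    cov3_tripodJoint hπ1 hq1 (by decide), cov3_tripodJoint hπ1 hq1 (by decide), Fin.prod_univ_three]
  linear_combination
    (π 0 * π 1 * ((q 0 1 0 - q 0 1 1) * (q 1 1 0 - q 1 1 1) * (q 2 1 0 - q 2 1 1))) ^ 2 * hmix

end Tripod

theorem sum_sq_mul_sq_le_sq_mul_prod {u a b c : ℝ} (hu₀ : 0 ≤ u) (hu : u ≤ 1 / 4)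
    (ha : |a| ≤ 1) (hb : |b| ≤ 1) (hc : |c| ≤ 1) :
    (u * a * b) ^ 2 * (u * a * c) ^ 2 + (u * a * b) ^ 2 * (u * b * c) ^ 2 +
        (u * a * c) ^ 2 * (u * b * c) ^ 2 ≤ (u * (a * b * c)) ^ 2 := by
  have hsum : a ^ 2 + b ^ 2 + c ^ 2 ≤ 3 := by
    linarith [(sq_le_one_iff_abs_le_one a).2 ha, (sq_le_one_iff_abs_le_one b).2 hb,
      (sq_le_one_iff_abs_le_one c).2 hc]
  have hweight : u ^ 2 * (a ^ 2 + b ^ 2 + c ^ 2) ≤ 1 :=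
    calc u ^ 2 * (a ^ 2 + b ^ 2 + c ^ 2) ≤ (1 / 4) ^ 2 * 3 := by gcongr
      _ ≤ 1 := by norm_num
  calc _ = (u * (a * b * c)) ^ 2 * (u ^ 2 * (a ^ 2 + b ^ 2 + c ^ 2)) := by ring
    _ ≤ _ := mul_le_of_le_one_right (sq_nonneg _) hweight

theorem sq_mul_le_sq_of_abs_le_one {x y : ℝ} (hy : |y| ≤ 1) : (x * y) ^ 2 ≤ x ^ 2 := by
  rw [mul_pow]
  exact mul_le_of_le_one_right (sq_nonneg x) ((sq_le_one_iff_abs_le_one y).2 hy)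

theorem sq_mul_prod_le_min {u a b c : ℝ} (ha : |a| ≤ 1) (hb : |b| ≤ 1) (hc : |c| ≤ 1) :
    (u * (a * b * c)) ^ 2 ≤ min (min ((u * a * b) ^ 2) ((u * a * c) ^ 2)) ((u * b * c) ^ 2) := by
  refine le_min (le_min ?_ ?_) ?_
  · rw [show u * (a * b * c) = u * a * b * c by ring]
    exact sq_mul_le_sq_of_abs_le_one hc
  · rw [show u * (a * b * c) = u * a * c * b by ring]
    exact sq_mul_le_sq_of_abs_le_one hb
  · rw [show u * (a * b * c) = u * b * c * a by ring]
    exact sq_mul_le_sq_of_abs_le_one ha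

/-- In the tripod model, `Det P = μ_{123}² + 4μ_{12}μ_{13}μ_{23}` satisfies
`μ_{12}²μ_{13}² + μ_{12}²μ_{23}² + μ_{13}²μ_{23}² ≤ Det P ≤ min{μ_{12}², μ_{13}², μ_{23}²}`. -/
theorem tripod_hyperdet_bounds (π : Fin 2 → ℝ) (q : Fin 3 → Fin 2 → Fin 2 → ℝ)
    (hπ : ∀ h, 0 ≤ π h) (hπ1 : π 0 + π 1 = 1)
    (hq : ∀ i a h, 0 ≤ q i a h) (hq1 : ∀ i h, q i 0 h + q i 1 h = 1)
    (p : (Fin 3 → Fin 2) → ℝ) (hp : p = tripodJoint π q)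
    (DetP : ℝ)
    (hDet : DetP = thirdCentral3 p ^ 2 + 4 * cov3 p 0 1 * cov3 p 0 2 * cov3 p 1 2) :
    cov3 p 0 1 ^ 2 * cov3 p 0 2 ^ 2 + cov3 p 0 1 ^ 2 * cov3 p 1 2 ^ 2 +
        cov3 p 0 2 ^ 2 * cov3 p 1 2 ^ 2 ≤ DetP ∧
      DetP ≤ min (min (cov3 p 0 1 ^ 2) (cov3 p 0 2 ^ 2)) (cov3 p 1 2 ^ 2) := by
  subst hp hDet
  rw [hyperdet_tripodJoint hπ1 hq1, Fin.prod_univ_three, cov3_tripodJoint hπ1 hq1 (by decide),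
    cov3_tripodJoint hπ1 hq1 (by decide), cov3_tripodJoint hπ1 hq1 (by decide)]
  have hu : π 0 * π 1 ≤ 1 / 4 := by
    have := four_mul_le_sq_add (π 0) (π 1)
    rw [hπ1] at this
    linarith
  have hd (i : Fin 3) : |q i 1 0 - q i 1 1| ≤ 1 :=
    abs_sub_le_iff.2 ⟨by linarith [hq i 1 1, hq i 0 0, hq1 i 0], by linarith [hq i 1 0, hq i 0 1, hq1 i 1]⟩
  exact ⟨sum_sq_mul_sq_le_sq_mul_prod (mul_nonneg (hπ 0) (hπ 1)) hu (hd 0) (hd 1) (hd 2),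
    sq_mul_prod_le_min (hd 0) (hd 1) (hd 2)⟩
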